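/- With the notation of the model, for all η ∈ V and n ∈ ℕ one has [F, b∘a] η_n = −λ qⁿ λ_n λ_{n−1} (w⁻¹Tη)_{n−2} − λ q^{3n+2} (w⁻¹Sη)_n, where [F, X] := F∘X − X∘F. -/

import Mathlib

/-!
Both `b ∘ a` and `F` move the ladder index by at most one, so the commutator can be computed on a
single vector `η_n`. The `R`-terms cancel because conjugating `wⁿ R w⁻ⁿ` by `w⁻¹` gives
`wⁿ⁻¹ R w⁻⁽ⁿ⁻¹⁾`, the `T`-terms combine through `T w⁻¹ = q w⁻¹ T`, and the `S`-terms leave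
`q^(n+1) (λ_{n+1}² - λ_n²) = q^(3n+1) (1 - q²)`.
-/

/-- `lam q n = λ_n = (1 - q^(2n))^(1/2)`, so `lam q 0 = 0`. -/
noncomputable def lam (q : ℝ) (n : ℕ) : ℝ := Real.sqrt (1 - q ^ (2 * n))

theorem lam_zero (q : ℝ) : lam q 0 = 0 := by simp [lam]

theorem lam_sq {q : ℝ} (hq : |q| ≤ 1) (n : ℕ) : lam q n ^ 2 = 1 - q ^ (2 * n) := by
  refine Real.sq_sqrt (sub_nonneg.mpr ?_)
  rw [pow_mul]
  exact pow_le_one₀ (sq_nonneg q) ((sq_le_one_iff_abs_le_one q).mpr hq)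

section Conjugation

variable {K V : Type*} [Semiring K] [AddCommMonoid V] [Module K V] (w : V ≃ₗ[K] V)

theorem LinearEquiv.map_symm_apply_of_conj_eq_smul {A : V →ₗ[K] V} {c : K}
    (h : ∀ η, w (A (w.symm η)) = c • A η) (η : V) : A (w.symm η) = c • w.symm (A η) :=
  w.injective <| by rw [h, map_smul, w.apply_symm_apply]

theorem LinearEquiv.symm_conj_pow_succ_apply (A : V →ₗ[K] V) (k : ℕ) (η : V) :
    w.symm ((w ^ (k + 1)) (A ((w.symm ^ (k + 1)) η))) =
      (w ^ k) (A ((w.symm ^ k) (w.symm η))) := by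
  rw [pow_succ', pow_succ, LinearEquiv.mul_apply, w.symm_apply_apply, LinearEquiv.mul_apply]

end Conjugation

theorem ba_apply_single {q : ℝ} {V : Type*} [AddCommGroup V] [Module ℂ V]
    {w : V ≃ₗ[ℂ] V} {a b : (ℕ →₀ V) →ₗ[ℂ] (ℕ →₀ V)}
    (ha : ∀ (η : V) (n : ℕ),
      a (Finsupp.single n η) = (lam q n : ℂ) • Finsupp.single (n - 1) η)
    (hb : ∀ (η : V) (n : ℕ),
      b (Finsupp.single n η) = -(((q ^ (n + 1) : ℝ)) : ℂ) • Finsupp.single n (w.symm η))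
    (η : V) (n : ℕ) :
    (b ∘ₗ a) (Finsupp.single n η) =
      -((lam q n * q ^ n : ℝ) : ℂ) • Finsupp.single (n - 1) (w.symm η) := by
  rw [LinearMap.comp_apply, ha, map_smul, hb, smul_smul]
  cases n with
  | zero => simp [lam_zero]
  | succ m => simp [pow_succ]

theorem commutator_F_ba_general
    (q : ℝ) (hq0 : 0 < q) (hq1 : q < 1)
    (V : Type*) [AddCommGroup V] [Module ℂ V]
    (w : V ≃ₗ[ℂ] V) (T S R : V →ₗ[ℂ] V)
    (hT : ∀ η : V, w (T (w.symm η)) = (q : ℂ) • T η)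
    (hS : ∀ η : V, w (S (w.symm η)) = (q : ℂ) • S η)
    (a b F : (ℕ →₀ V) →ₗ[ℂ] (ℕ →₀ V))
    (ha : ∀ (η : V) (n : ℕ),
      a (Finsupp.single n η) = (lam q n : ℂ) • Finsupp.single (n - 1) η)
    (hb : ∀ (η : V) (n : ℕ),
      b (Finsupp.single n η) = -(((q ^ (n + 1) : ℝ)) : ℂ) • Finsupp.single n (w.symm η))
    (hF : ∀ (η : V) (n : ℕ),
      F (Finsupp.single n η) = (lam q n : ℂ) • Finsupp.single (n - 1) (T η)
        + Finsupp.single n ((w ^ n) (R ((w.symm ^ n) η)))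
        + (lam q (n + 1) : ℂ) • Finsupp.single (n + 1) (S η))
    :
    ∀ (η : V) (n : ℕ),
      (F ∘ₗ (b ∘ₗ a) - (b ∘ₗ a) ∘ₗ F) (Finsupp.single n η)
        = -(((q - q⁻¹) * q ^ n * lam q n * lam q (n - 1) : ℝ) : ℂ) •
              Finsupp.single (n - 2) (w.symm (T η))
          - (((q - q⁻¹) * q ^ (3 * n + 2) : ℝ) : ℂ) • Finsupp.single n (w.symm (S η)) := by
  have hba := ba_apply_single ha hb
  have hinv : (q : ℂ) * (q : ℂ)⁻¹ = 1 := mul_inv_cancel₀ (by exact_mod_cast hq0.ne')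
  have hlam_sq (n : ℕ) : (lam q n : ℂ) ^ 2 = 1 - (q : ℂ) ^ (2 * n) := by
    exact_mod_cast congrArg Complex.ofReal (lam_sq (abs_le.mpr ⟨by linarith, hq1.le⟩) n)
  intro η n
  rw [LinearMap.sub_apply, LinearMap.comp_apply, LinearMap.comp_apply (b ∘ₗ a), hba, map_smul,
    hF, hF, map_add, map_add, map_smul, map_smul, hba, hba, hba]
  cases n with
  | zero =>
    simp only [lam_zero, Complex.ofReal_zero, zero_mul, neg_zero, zero_smul, zero_add, zero_sub,
      Nat.zero_sub, smul_smul]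
    match_scalars
    · push_cast
      linear_combination (q : ℂ) * hlam_sq 1 - (q : ℂ) * hinv
    · simp
  | succ m =>
    rw [show m + 1 - 2 = m - 1 by omega]
    simp only [Nat.add_sub_cancel, w.symm_conj_pow_succ_apply, ← Finsupp.smul_single, smul_smul,
      w.map_symm_apply_of_conj_eq_smul hT, w.map_symm_apply_of_conj_eq_smul hS]
    match_scalars
    · linear_combination -(q : ℂ) ^ m * lam q (m + 1) * lam q m * hinv
    · ring
    · linear_combination
        (q : ℂ) ^ (m + 2) * (hlam_sq (m + 1 + 1) - hlam_sq (m + 1)) - (q : ℂ) ^ (3 * m + 4) * hinv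

/-- Section 6 of the paper: the commutator `[F, π(x₊)]` for `x₊ = ba`, a generator of the Podles sphere algebra `𝒪(S²_q)`. -/
theorem commutator_F_ba
    (q : ℝ) (hq0 : 0 < q) (hq1 : q < 1)
    (V : Type*) [AddCommGroup V] [Module ℂ V]
    (w : V ≃ₗ[ℂ] V) (T S R : V →ₗ[ℂ] V)
    (hT : ∀ η : V, w (T (w.symm η)) = (q : ℂ) • T η)
    (hS : ∀ η : V, w (S (w.symm η)) = (q : ℂ) • S η)
    (hR : ∀ η : V, w (w (R (w.symm (w.symm η)))) + ((q ^ 2 : ℝ) : ℂ) • R η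
            = ((1 + q ^ 2 : ℝ) : ℂ) • w (R (w.symm η)))
    (a b c d F : (ℕ →₀ V) →ₗ[ℂ] (ℕ →₀ V))
    (ha : ∀ (η : V) (n : ℕ),
      a (Finsupp.single n η) = (lam q n : ℂ) • Finsupp.single (n - 1) η)
    (hb : ∀ (η : V) (n : ℕ),
      b (Finsupp.single n η) = -(((q ^ (n + 1) : ℝ)) : ℂ) • Finsupp.single n (w.symm η))
    (hc : ∀ (η : V) (n : ℕ),
      c (Finsupp.single n η) = ((q ^ n : ℝ) : ℂ) • Finsupp.single n (w η))
    (hd : ∀ (η : V) (n : ℕ),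
      d (Finsupp.single n η) = (lam q (n + 1) : ℂ) • Finsupp.single (n + 1) η)
    (hF : ∀ (η : V) (n : ℕ),
      F (Finsupp.single n η) = (lam q n : ℂ) • Finsupp.single (n - 1) (T η)
        + Finsupp.single n ((w ^ n) (R ((w.symm ^ n) η)))
        + (lam q (n + 1) : ℂ) • Finsupp.single (n + 1) (S η))
    :
    ∀ (η : V) (n : ℕ),
      (F ∘ₗ (b ∘ₗ a) - (b ∘ₗ a) ∘ₗ F) (Finsupp.single n η)
        = -(((q - q⁻¹) * q ^ n * lam q n * lam q (n - 1) : ℝ) : ℂ) •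
              Finsupp.single (n - 2) (w.symm (T η))
          - (((q - q⁻¹) * q ^ (3 * n + 2) : ℝ) : ℂ) • Finsupp.single n (w.symm (S η)) :=
  commutator_F_ba_general q hq0 hq1 V w T S R hT hS a b F ha hb hF
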